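/- Let n ≥ 2, 0 < a < 1, and Ω = {(x', xₙ) ∈ ℝ^{n−1} × ℝ : |x'| < 1, 0 < xₙ < 1 − |x'|²}. Define w(x', xₙ) = xₙ − xₙ^a (1 − |x'|²)^{1−a}. Then w is smooth and convex in Ω, w = 0 on ∂Ω, and det D²w = a(1−a)(2−2a)^{n−1} xₙ^{na−2} (1 − |x'|²)^{1−na} in Ω. -/

import Mathlib

open Set

/-- The determinant of the Hessian matrix of `w` at `x`, formed from second directional
derivatives along the standard coordinate directions. -/
noncomputable def hessDet {n : ℕ} (w : EuclideanSpace ℝ (Fin n) → ℝ)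
    (x : EuclideanSpace ℝ (Fin n)) : ℝ :=
  (Matrix.of fun i j : Fin n =>
    fderiv ℝ (fun y => fderiv ℝ w y (EuclideanSpace.single j 1)) x
      (EuclideanSpace.single i 1)).det

/-- `|x'|²`, the squared norm of the first `m` coordinates of a point in `ℝ^{m+1}`. -/
def sq' {m : ℕ} (x : EuclideanSpace ℝ (Fin (m + 1))) : ℝ :=
  ∑ i : Fin m, (x (Fin.castSucc i)) ^ 2

section Aux
open Fin
variable {m : ℕ}

noncomputable def Lsq (x : EuclideanSpace ℝ (Fin (m + 1))) :
    EuclideanSpace ℝ (Fin (m + 1)) →L[ℝ] ℝ :=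
  ∑ i : Fin m, (2 * x (Fin.castSucc i)) • (EuclideanSpace.proj (Fin.castSucc i))

lemma hasFDerivAt_sq' (x : EuclideanSpace ℝ (Fin (m + 1))) :
    HasFDerivAt sq' (Lsq x) x := by
  have h : ∀ i : Fin m, HasFDerivAt (fun y : EuclideanSpace ℝ (Fin (m+1)) => (y (Fin.castSucc i))^2)
      ((2 * x (Fin.castSucc i)) • (EuclideanSpace.proj (Fin.castSucc i) : EuclideanSpace ℝ (Fin (m+1)) →L[ℝ] ℝ)) x := by
    intro i
    have h1 : HasFDerivAt (fun y : EuclideanSpace ℝ (Fin (m+1)) => y (Fin.castSucc i))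
        (EuclideanSpace.proj (Fin.castSucc i) : EuclideanSpace ℝ (Fin (m+1)) →L[ℝ] ℝ) x := by
      simpa using (EuclideanSpace.proj (Fin.castSucc i) : EuclideanSpace ℝ (Fin (m+1)) →L[ℝ] ℝ).hasFDerivAt (x := x)
    have h2 := (hasDerivAt_pow 2 (x (Fin.castSucc i))).comp_hasFDerivAt x h1
    simp [pow_one] at h2; exact h2
  exact HasFDerivAt.fun_sum (fun i _ => h i)

lemma Lsq_single_last (x : EuclideanSpace ℝ (Fin (m + 1))) :
    Lsq x (EuclideanSpace.single (Fin.last m) 1) = 0 := by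
  simp [Lsq, EuclideanSpace.single_apply, (Fin.castSucc_lt_last _).ne]

lemma Lsq_single_cs (x : EuclideanSpace ℝ (Fin (m + 1))) (i : Fin m) :
    Lsq x (EuclideanSpace.single (Fin.castSucc i) 1) = 2 * x (Fin.castSucc i) := by
  simp [Lsq, EuclideanSpace.single_apply, Fin.castSucc_inj, Finset.sum_ite_eq]

/-- derivative of `t^p * s^q` on `U` -/
lemma hasFDerivAt_F (x : EuclideanSpace ℝ (Fin (m + 1))) (ht : 0 < x (Fin.last m))
    (hs : sq' x < 1) (p q : ℝ) :
    HasFDerivAt (fun y : EuclideanSpace ℝ (Fin (m+1)) =>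
        (y (Fin.last m)) ^ p * (1 - sq' y) ^ q)
      (((x (Fin.last m)) ^ p) • ((q * (1 - sq' x) ^ (q - 1)) • (-(Lsq x))) +
        ((1 - sq' x) ^ q) • ((p * (x (Fin.last m)) ^ (p - 1)) •
          (EuclideanSpace.proj (Fin.last m) : EuclideanSpace ℝ (Fin (m+1)) →L[ℝ] ℝ))) x := by
  have hproj : HasFDerivAt (fun y : EuclideanSpace ℝ (Fin (m+1)) => y (Fin.last m))
      (EuclideanSpace.proj (Fin.last m) : EuclideanSpace ℝ (Fin (m+1)) →L[ℝ] ℝ) x := by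
    simpa using (EuclideanSpace.proj (Fin.last m) :
      EuclideanSpace ℝ (Fin (m+1)) →L[ℝ] ℝ).hasFDerivAt (x := x)
  have h1 : HasFDerivAt (fun y : EuclideanSpace ℝ (Fin (m+1)) => (y (Fin.last m)) ^ p)
      ((p * (x (Fin.last m)) ^ (p - 1)) •
        (EuclideanSpace.proj (Fin.last m) : EuclideanSpace ℝ (Fin (m+1)) →L[ℝ] ℝ)) x := by
    have := (Real.hasDerivAt_rpow_const (p := p) (Or.inl ht.ne')).comp_hasFDerivAt x hproj; exact this
  have hinner : HasFDerivAt (fun y : EuclideanSpace ℝ (Fin (m+1)) => 1 - sq' y) (-(Lsq x)) x :=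
    (hasFDerivAt_sq' x).const_sub 1
  have h2 : HasFDerivAt (fun y : EuclideanSpace ℝ (Fin (m+1)) => (1 - sq' y) ^ q)
      ((q * (1 - sq' x) ^ (q - 1)) • (-(Lsq x))) x :=
    (Real.hasDerivAt_rpow_const (Or.inl (by linarith))).comp_hasFDerivAt x hinner
  exact h1.mul h2

/-- derivative of `y_j * t^p * s^q` -/
lemma hasFDerivAt_G (x : EuclideanSpace ℝ (Fin (m + 1))) (ht : 0 < x (Fin.last m))
    (hs : sq' x < 1) (p q : ℝ) (j : Fin m) :
    HasFDerivAt (fun y : EuclideanSpace ℝ (Fin (m+1)) =>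
        y (Fin.castSucc j) * ((y (Fin.last m)) ^ p * (1 - sq' y) ^ q))
      ((x (Fin.castSucc j)) • (((x (Fin.last m)) ^ p) • ((q * (1 - sq' x) ^ (q - 1)) • (-(Lsq x))) +
        ((1 - sq' x) ^ q) • ((p * (x (Fin.last m)) ^ (p - 1)) •
          (EuclideanSpace.proj (Fin.last m) : EuclideanSpace ℝ (Fin (m+1)) →L[ℝ] ℝ))) +
       ((x (Fin.last m)) ^ p * (1 - sq' x) ^ q) •
         (EuclideanSpace.proj (Fin.castSucc j) : EuclideanSpace ℝ (Fin (m+1)) →L[ℝ] ℝ)) x := by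
  have hproj : HasFDerivAt (fun y : EuclideanSpace ℝ (Fin (m+1)) => y (Fin.castSucc j))
      (EuclideanSpace.proj (Fin.castSucc j) : EuclideanSpace ℝ (Fin (m+1)) →L[ℝ] ℝ) x := by
    simpa using (EuclideanSpace.proj (Fin.castSucc j) :
      EuclideanSpace ℝ (Fin (m+1)) →L[ℝ] ℝ).hasFDerivAt (x := x)
  exact hproj.mul (hasFDerivAt_F x ht hs p q)

section eval
variable (x : EuclideanSpace ℝ (Fin (m + 1))) (p q : ℝ)

lemma F'_last :
    (((x (Fin.last m)) ^ p) • ((q * (1 - sq' x) ^ (q - 1)) • (-(Lsq x))) +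
        ((1 - sq' x) ^ q) • ((p * (x (Fin.last m)) ^ (p - 1)) •
          (EuclideanSpace.proj (Fin.last m) : EuclideanSpace ℝ (Fin (m+1)) →L[ℝ] ℝ)))
      (EuclideanSpace.single (Fin.last m) 1)
      = (1 - sq' x) ^ q * (p * (x (Fin.last m)) ^ (p - 1)) := by
  simp [Lsq_single_last, EuclideanSpace.single_apply]

lemma F'_cs (i : Fin m) :
    (((x (Fin.last m)) ^ p) • ((q * (1 - sq' x) ^ (q - 1)) • (-(Lsq x))) +
        ((1 - sq' x) ^ q) • ((p * (x (Fin.last m)) ^ (p - 1)) •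
          (EuclideanSpace.proj (Fin.last m) : EuclideanSpace ℝ (Fin (m+1)) →L[ℝ] ℝ)))
      (EuclideanSpace.single (Fin.castSucc i) 1)
      = -((x (Fin.last m)) ^ p * (q * (1 - sq' x) ^ (q - 1) * (2 * x (Fin.castSucc i)))) := by
  simp [Lsq_single_cs, EuclideanSpace.single_apply, (Fin.castSucc_lt_last i).ne, (Fin.castSucc_lt_last i).ne']
end eval

lemma continuous_sq' : Continuous (sq' (m := m)) := by
  refine continuous_finset_sum _ fun i _ => ?_
  exact ((continuous_apply _).comp (PiLp.continuous_ofLp _ _)).pow 2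

lemma isOpen_U : IsOpen {y : EuclideanSpace ℝ (Fin (m+1)) | 0 < y (Fin.last m) ∧ sq' y < 1} := by
  refine IsOpen.inter ?_ ?_
  · exact isOpen_lt continuous_const ((continuous_apply _).comp (PiLp.continuous_ofLp _ _))
  · exact isOpen_lt continuous_sq' continuous_const

section entries
variable {a : ℝ} (ha1 : 0 < a) (ha2 : a < 1)
variable (x : EuclideanSpace ℝ (Fin (m + 1))) (ht : 0 < x (Fin.last m)) (hs : sq' x < 1)

noncomputable abbrev wfun : EuclideanSpace ℝ (Fin (m+1)) → ℝ :=
  fun y => y (Fin.last m) - (y (Fin.last m)) ^ a * (1 - sq' y) ^ (1 - a)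

include ht hs ha1 ha2

lemma hasFDerivAt_w :
    HasFDerivAt (wfun (a := a))
      ((EuclideanSpace.proj (Fin.last m) : EuclideanSpace ℝ (Fin (m+1)) →L[ℝ] ℝ) -
       (((x (Fin.last m)) ^ a) • (((1-a) * (1 - sq' x) ^ (1-a - 1)) • (-(Lsq x))) +
        ((1 - sq' x) ^ (1-a)) • ((a * (x (Fin.last m)) ^ (a - 1)) •
          (EuclideanSpace.proj (Fin.last m) : EuclideanSpace ℝ (Fin (m+1)) →L[ℝ] ℝ)))) x := by
  have hproj : HasFDerivAt (fun y : EuclideanSpace ℝ (Fin (m+1)) => y (Fin.last m))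
      (EuclideanSpace.proj (Fin.last m) : EuclideanSpace ℝ (Fin (m+1)) →L[ℝ] ℝ) x := by
    simpa using (EuclideanSpace.proj (Fin.last m) :
      EuclideanSpace ℝ (Fin (m+1)) →L[ℝ] ℝ).hasFDerivAt (x := x)
  exact hproj.sub (hasFDerivAt_F x ht hs a (1-a))

lemma gLast_eventually :
    (fun y => fderiv ℝ (wfun (a := a)) y (EuclideanSpace.single (Fin.last m) 1)) =ᶠ[nhds x]
    (fun y => 1 - a * ((y (Fin.last m)) ^ (a-1) * (1 - sq' y) ^ (1-a))) := by
  filter_upwards [isOpen_U.mem_nhds ⟨ht, hs⟩] with y hy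
  rw [(hasFDerivAt_w ha1 ha2 y hy.1 hy.2).fderiv]
  simp only [ContinuousLinearMap.sub_apply, F'_last]
  rw [show ((EuclideanSpace.proj (Fin.last m) : EuclideanSpace ℝ (Fin (m+1)) →L[ℝ] ℝ))
      (EuclideanSpace.single (Fin.last m) 1) = 1 by simp [EuclideanSpace.single_apply]]
  ring

lemma gCs_eventually (j : Fin m) :
    (fun y => fderiv ℝ (wfun (a := a)) y (EuclideanSpace.single (Fin.castSucc j) 1)) =ᶠ[nhds x]
    (fun y => (2*(1-a)) * (y (Fin.castSucc j) * ((y (Fin.last m)) ^ a * (1 - sq' y) ^ (-a)))) := by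
  filter_upwards [isOpen_U.mem_nhds ⟨ht, hs⟩] with y hy
  rw [(hasFDerivAt_w ha1 ha2 y hy.1 hy.2).fderiv]
  simp only [ContinuousLinearMap.sub_apply, F'_cs]
  rw [show ((EuclideanSpace.proj (Fin.last m) : EuclideanSpace ℝ (Fin (m+1)) →L[ℝ] ℝ))
      (EuclideanSpace.single (Fin.castSucc j) 1) = 0 by
    simp [EuclideanSpace.single_apply, (Fin.castSucc_lt_last j).ne']]
  rw [show (1 : ℝ) - a - 1 = -a by ring]
  ring
end entries

lemma proj_single (i j : Fin (m+1)) :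
    (EuclideanSpace.proj i : EuclideanSpace ℝ (Fin (m+1)) →L[ℝ] ℝ)
      (EuclideanSpace.single j 1) = if j = i then 1 else 0 := by
  simp [EuclideanSpace.single_apply, eq_comm]

section entries2
variable {a : ℝ} (ha1 : 0 < a) (ha2 : a < 1)
variable (x : EuclideanSpace ℝ (Fin (m + 1))) (ht : 0 < x (Fin.last m)) (hs : sq' x < 1)
include ha1 ha2 ht hs

lemma entry_last_last :
    fderiv ℝ (fun y => fderiv ℝ (wfun (a := a)) y (EuclideanSpace.single (Fin.last m) 1)) x
      (EuclideanSpace.single (Fin.last m) 1)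
      = a * (1-a) * (x (Fin.last m)) ^ (a-2) * (1 - sq' x) ^ (1-a) := by
  rw [(gLast_eventually ha1 ha2 x ht hs).fderiv_eq,
    (((hasFDerivAt_F x ht hs (a-1) (1-a)).const_mul a).const_sub 1).fderiv]
  simp only [ContinuousLinearMap.neg_apply, ContinuousLinearMap.smul_apply, F'_last,
    smul_eq_mul]
  rw [show a - 1 - 1 = a - 2 by ring]
  ring

lemma entry_cs_last (i : Fin m) :
    fderiv ℝ (fun y => fderiv ℝ (wfun (a := a)) y (EuclideanSpace.single (Fin.last m) 1)) x
      (EuclideanSpace.single (Fin.castSucc i) 1)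
      = 2*a*(1-a) * x (Fin.castSucc i) * (x (Fin.last m)) ^ (a-1) * (1 - sq' x) ^ (-a) := by
  rw [(gLast_eventually ha1 ha2 x ht hs).fderiv_eq,
    (((hasFDerivAt_F x ht hs (a-1) (1-a)).const_mul a).const_sub 1).fderiv]
  simp only [ContinuousLinearMap.neg_apply, ContinuousLinearMap.smul_apply, F'_cs,
    smul_eq_mul]
  rw [show (1 : ℝ) - a - 1 = -a by ring]
  ring

lemma entry_last_cs (j : Fin m) :
    fderiv ℝ (fun y => fderiv ℝ (wfun (a := a)) y (EuclideanSpace.single (Fin.castSucc j) 1)) x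
      (EuclideanSpace.single (Fin.last m) 1)
      = 2*a*(1-a) * x (Fin.castSucc j) * (x (Fin.last m)) ^ (a-1) * (1 - sq' x) ^ (-a) := by
  rw [(gCs_eventually ha1 ha2 x ht hs j).fderiv_eq,
    ((hasFDerivAt_G x ht hs a (-a) j).const_mul (2*(1-a))).fderiv]
  simp only [ContinuousLinearMap.smul_apply, ContinuousLinearMap.add_apply,
    ContinuousLinearMap.neg_apply, smul_eq_mul, proj_single, Lsq_single_last,
    Lsq_single_cs]
  simp [(Fin.castSucc_lt_last j).ne, (Fin.castSucc_lt_last j).ne']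
  ring

lemma entry_cs_cs (i j : Fin m) :
    fderiv ℝ (fun y => fderiv ℝ (wfun (a := a)) y (EuclideanSpace.single (Fin.castSucc j) 1)) x
      (EuclideanSpace.single (Fin.castSucc i) 1)
      = (if i = j then 2*(1-a) * (x (Fin.last m)) ^ a * (1 - sq' x) ^ (-a) else 0)
        + 4*a*(1-a) * x (Fin.castSucc i) * x (Fin.castSucc j) * (x (Fin.last m)) ^ a
          * (1 - sq' x) ^ (-a-1) := by
  rw [(gCs_eventually ha1 ha2 x ht hs j).fderiv_eq,
    ((hasFDerivAt_G x ht hs a (-a) j).const_mul (2*(1-a))).fderiv]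
  simp only [ContinuousLinearMap.smul_apply, ContinuousLinearMap.add_apply,
    ContinuousLinearMap.neg_apply, smul_eq_mul, proj_single, Lsq_single_last,
    Lsq_single_cs, Fin.castSucc_inj]
  rw [show -a - 1 = -1 - a by ring]
  by_cases h : i = j
  · subst h
    simp [(Fin.castSucc_lt_last i).ne, (Fin.castSucc_lt_last i).ne']
    ring
  · have h' : j ≠ i := fun hh => h hh.symm
    simp [h, h', (Fin.castSucc_lt_last i).ne, (Fin.castSucc_lt_last i).ne',
      (Fin.castSucc_lt_last j).ne, (Fin.castSucc_lt_last j).ne']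
    ring
end entries2

noncomputable def Hmat (m : ℕ) (a t s : ℝ) (v : Fin m → ℝ) :
    Matrix (Fin (m+1)) (Fin (m+1)) ℝ :=
  Matrix.of fun i j =>
    Fin.lastCases
      (Fin.lastCases (a*(1-a)*t^(a-2)*s^(1-a))
        (fun j' => 2*a*(1-a) * v j' * t^(a-1) * s^(-a)) j)
      (fun i' => Fin.lastCases (2*a*(1-a) * v i' * t^(a-1) * s^(-a))
        (fun j' => (if i' = j' then 2*(1-a)*t^a*s^(-a) else 0)
          + 4*a*(1-a) * v i' * v j' * t^a * s^(-a-1)) j) i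

lemma det_Hmat (a t s : ℝ) (ha1 : 0 < a) (ha2 : a < 1) (ht : 0 < t) (hs0 : 0 < s)
    (v : Fin m → ℝ) :
    (Hmat m a t s v).det
      = a * (1-a) * (2 - 2*a) ^ m * t ^ (((m : ℝ) + 1) * a - 2) *
        s ^ (1 - ((m : ℝ) + 1) * a) := by
  have hγ0 : s / (2*t) ≠ 0 := by positivity
  have hBγ : (4*a*(1-a)*t^a*s^(-a-1)) * (s/(2*t)) = 2*a*(1-a) * t^(a-1) * s^(-a) := by
    rw [Real.rpow_sub_one hs0.ne' (-a), Real.rpow_sub_one ht.ne' a]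
    field_simp
    ring
  have hBγγ : (4*a*(1-a)*t^a*s^(-a-1)) * (s/(2*t)) * (s/(2*t))
      = a*(1-a) * t^(a-2) * s^(1-a) := by
    rw [show a-2 = a-1-1 by ring, Real.rpow_sub_one ht.ne' (a-1),
      Real.rpow_sub_one ht.ne' a,
      show (1:ℝ)-a = -a-1+1+1 by ring, Real.rpow_add_one hs0.ne' (-a-1+1),
      Real.rpow_add_one hs0.ne' (-a-1)]
    field_simp
    ring
  set B : Matrix (Fin (m+1)) (Fin (m+1)) ℝ :=
    Matrix.of (fun i j =>
      Fin.lastCases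
        ((4*a*(1-a)*t^a*s^(-a-1)) * (s/(2*t)) *
          (Fin.lastCases (s/(2*t)) (fun j' => v j') j))
        (fun i' => if Fin.castSucc i' = j then 2*(1-a)*t^a*s^(-a) else 0) i) with hBdef
  have hdet : (Hmat m a t s v).det = B.det := by
    apply Matrix.det_eq_of_forall_row_eq_smul_add_const
      (fun i => Fin.lastCases 0 (fun i' => v i' / (s/(2*t))) i) (Fin.last m)
      (by simp)
    intro i j
    induction i using Fin.lastCases with
    | last =>
      simp only [Fin.lastCases_last, zero_mul, add_zero, hBdef, Matrix.of_apply, Hmat]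
      induction j using Fin.lastCases with
      | last => simp only [Fin.lastCases_last, hBγγ]
      | cast j => simp only [Fin.lastCases_last, Fin.lastCases_castSucc, hBγ]; ring
    | cast i =>
      have hne : (Fin.castSucc i : Fin (m+1)) ≠ Fin.last m := (Fin.castSucc_lt_last i).ne
      simp only [Fin.lastCases_castSucc, hBdef, Matrix.of_apply, Hmat, Fin.lastCases_last]
      induction j using Fin.lastCases with
      | last =>
        simp only [Fin.lastCases_last, Fin.lastCases_castSucc, if_neg hne]
        rw [show v i / (s/(2*t)) * ((4*a*(1-a)*t^a*s^(-a-1)) * (s/(2*t)) * (s/(2*t)))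
            = v i * ((4*a*(1-a)*t^a*s^(-a-1)) * (s/(2*t))) by field_simp, hBγ]
        ring
      | cast j =>
        simp only [Fin.lastCases_castSucc, Fin.castSucc_inj]
        rw [show v i / (s/(2*t)) * ((4*a*(1-a)*t^a*s^(-a-1)) * (s/(2*t)) * v j)
            = 4*a*(1-a) * v i * v j * t^a * s^(-a-1) by field_simp]
  rw [hdet, Matrix.det_of_lowerTriangular B ?_]
  · rw [Fin.prod_univ_castSucc]
    simp only [hBdef, Matrix.of_apply, Fin.lastCases_last, Fin.lastCases_castSucc,
      eq_self_iff_true, if_true]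
    rw [Finset.prod_const, Finset.card_univ, Fintype.card_fin, hBγγ]
    have e1 : ((2*(1-a)*t^a*s^(-a)) : ℝ) ^ m
        = (2-2*a)^m * t^(a*(m:ℝ)) * s^(-a*(m:ℝ)) := by
      rw [mul_pow, mul_pow, ← Real.rpow_natCast (t^a) m, ← Real.rpow_natCast (s^(-a)) m,
        ← Real.rpow_mul ht.le, ← Real.rpow_mul hs0.le,
        show (2:ℝ)*(1-a) = 2-2*a by ring]
    rw [e1]
    have e2 : t^(a*(m:ℝ)) * t^(a-2) = t ^ (((m : ℝ) + 1) * a - 2) := by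
      rw [← Real.rpow_add ht]; congr 1; ring
    have e3 : s^(-a*(m:ℝ)) * s^(1-a) = s ^ (1 - ((m : ℝ) + 1) * a) := by
      rw [← Real.rpow_add hs0]; congr 1; ring
    calc (2-2*a)^m * t^(a*(m:ℝ)) * s^(-a*(m:ℝ)) * (a*(1-a) * t^(a-2) * s^(1-a))
        = a*(1-a) * (2-2*a)^m * (t^(a*(m:ℝ)) * t^(a-2)) * (s^(-a*(m:ℝ)) * s^(1-a)) := by ring
      _ = _ := by rw [e2, e3]
  · intro i j hij
    rw [OrderDual.toDual_lt_toDual] at hij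
    induction i using Fin.lastCases with
    | last => exact absurd hij (not_lt.2 (Fin.le_last j))
    | cast i =>
      simp only [hBdef, Matrix.of_apply, Fin.lastCases_castSucc]
      rw [if_neg]
      intro h
      rw [h] at hij
      exact lt_irrefl _ hij

lemma sq'_comb (x y : EuclideanSpace ℝ (Fin (m+1))) {l mu : ℝ} (hl : 0 ≤ l) (hmu : 0 ≤ mu)
    (hlm : l + mu = 1) : sq' (l • x + mu • y) ≤ l * sq' x + mu * sq' y := by
  simp only [sq', PiLp.add_apply, PiLp.smul_apply, smul_eq_mul]
  rw [Finset.mul_sum, Finset.mul_sum, ← Finset.sum_add_distrib]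
  refine Finset.sum_le_sum fun i _ => ?_
  nlinarith [sq_nonneg (x (Fin.castSucc i) - y (Fin.castSucc i)), mul_nonneg hl hmu]

/-- superadditivity / concavity of the two-variable geometric mean -/
lemma geom_comb {a : ℝ} (ha1 : 0 < a) (ha2 : a < 1) {t1 t2 s1 s2 l mu : ℝ}
    (ht1 : 0 ≤ t1) (ht2 : 0 ≤ t2) (hs1 : 0 ≤ s1) (hs2 : 0 ≤ s2)
    (hl : 0 ≤ l) (hmu : 0 ≤ mu) (hlm : l + mu = 1) :
    l * (t1 ^ a * s1 ^ (1-a)) + mu * (t2 ^ a * s2 ^ (1-a))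
      ≤ (l*t1 + mu*t2) ^ a * (l*s1 + mu*s2) ^ (1-a) := by
  have hA : 0 ≤ l*t1 + mu*t2 := by positivity
  have hB : 0 ≤ l*s1 + mu*s2 := by positivity
  rcases hA.eq_or_lt with hA0 | hA0
  · have h1 : l * t1 = 0 ∧ mu * t2 = 0 := by
      constructor <;> nlinarith [mul_nonneg hl ht1, mul_nonneg hmu ht2]
    have e1 : l * (t1 ^ a * s1 ^ (1-a)) = 0 := by
      rcases mul_eq_zero.1 h1.1 with h | h
      · rw [h, zero_mul]
      · rw [h, Real.zero_rpow ha1.ne', zero_mul, mul_zero]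
    have e2 : mu * (t2 ^ a * s2 ^ (1-a)) = 0 := by
      rcases mul_eq_zero.1 h1.2 with h | h
      · rw [h, zero_mul]
      · rw [h, Real.zero_rpow ha1.ne', zero_mul, mul_zero]
    rw [e1, e2, ← hA0, Real.zero_rpow ha1.ne', zero_mul]; norm_num
  rcases hB.eq_or_lt with hB0 | hB0
  · have h1 : l * s1 = 0 ∧ mu * s2 = 0 := by
      constructor <;> nlinarith [mul_nonneg hl hs1, mul_nonneg hmu hs2]
    have e1 : l * (t1 ^ a * s1 ^ (1-a)) = 0 := by
      rcases mul_eq_zero.1 h1.1 with h | h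
      · rw [h, zero_mul]
      · rw [h, Real.zero_rpow (by linarith : (1:ℝ)-a ≠ 0), mul_zero, mul_zero]
    have e2 : mu * (t2 ^ a * s2 ^ (1-a)) = 0 := by
      rcases mul_eq_zero.1 h1.2 with h | h
      · rw [h, zero_mul]
      · rw [h, Real.zero_rpow (by linarith : (1:ℝ)-a ≠ 0), mul_zero, mul_zero]
    rw [e1, e2, ← hB0, Real.zero_rpow (by linarith : (1:ℝ)-a ≠ 0), mul_zero]; norm_num
  set A := l*t1 + mu*t2
  set B := l*s1 + mu*s2
  have hP : (0:ℝ) < A ^ a * B ^ (1-a) := by positivity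
  have key : ∀ t s : ℝ, 0 ≤ t → 0 ≤ s →
      t ^ a * s ^ (1-a) ≤ (a*(t/A) + (1-a)*(s/B)) * (A ^ a * B ^ (1-a)) := by
    intro t s htn hsn
    have h := Real.geom_mean_le_arith_mean2_weighted ha1.le (by linarith : (0:ℝ) ≤ 1-a)
      (div_nonneg htn hA0.le) (div_nonneg hsn hB0.le) (by ring)
    rw [Real.div_rpow htn hA0.le, Real.div_rpow hsn hB0.le] at h
    have e : t ^ a * s ^ (1-a)
        = (t ^ a / A ^ a * (s ^ (1-a) / B ^ (1-a))) * (A ^ a * B ^ (1-a)) := by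
      field_simp
    rw [e]
    exact mul_le_mul_of_nonneg_right h hP.le
  calc l * (t1 ^ a * s1 ^ (1-a)) + mu * (t2 ^ a * s2 ^ (1-a))
      ≤ l * ((a*(t1/A) + (1-a)*(s1/B)) * (A ^ a * B ^ (1-a)))
        + mu * ((a*(t2/A) + (1-a)*(s2/B)) * (A ^ a * B ^ (1-a))) :=
        add_le_add (mul_le_mul_of_nonneg_left (key t1 s1 ht1 hs1) hl)
          (mul_le_mul_of_nonneg_left (key t2 s2 ht2 hs2) hmu)
    _ = (l * (a*(t1/A) + (1-a)*(s1/B)) + mu * (a*(t2/A) + (1-a)*(s2/B)))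
        * (A ^ a * B ^ (1-a)) := by ring
    _ = 1 * (A ^ a * B ^ (1-a)) := by
        congr 1
        field_simp
        ring
    _ = A ^ a * B ^ (1-a) := one_mul _

lemma comb_lt {p q P Q l mu : ℝ} (h1 : p < P) (h2 : q < Q) (hl : 0 ≤ l) (hmu : 0 ≤ mu)
    (hlm : l + mu = 1) : l*p + mu*q < l*P + mu*Q := by
  rcases hl.eq_or_lt with rfl | hl0
  · have : mu = 1 := by linarith
    subst this; simpa using h2
  · have := mul_lt_mul_of_pos_left h1 hl0
    have := mul_le_mul_of_nonneg_left h2.le hmu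
    linarith

theorem stmt_15' (m : ℕ) (hm : 1 ≤ m) (a : ℝ) (ha : a ∈ Set.Ioo (0:ℝ) 1)
    (Ω : Set (EuclideanSpace ℝ (Fin (m + 1))))
    (hΩ : Ω = {x | sq' x < 1 ∧ 0 < x (Fin.last m) ∧ x (Fin.last m) < 1 - sq' x})
    (w : EuclideanSpace ℝ (Fin (m + 1)) → ℝ)
    (hw : w = fun x => x (Fin.last m) - (x (Fin.last m)) ^ a * (1 - sq' x) ^ (1 - a)) :
    ContDiffOn ℝ (⊤ : ℕ∞) w Ω ∧ ConvexOn ℝ Ω w ∧ (∀ x ∈ frontier Ω, w x = 0) ∧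
    ∀ x ∈ Ω, (Matrix.of fun i j : Fin (m+1) =>
      fderiv ℝ (fun y => fderiv ℝ w y (EuclideanSpace.single j 1)) x
        (EuclideanSpace.single i 1)).det =
      a * (1 - a) * (2 - 2 * a) ^ m * (x (Fin.last m)) ^ (((m : ℝ) + 1) * a - 2) *
        (1 - sq' x) ^ (1 - ((m : ℝ) + 1) * a) := by
  obtain ⟨ha1, ha2⟩ := ha
  subst hΩ hw
  have hcoord : ∀ i : Fin (m+1), ContDiff ℝ (⊤ : WithTop ℕ∞)
      (fun y : EuclideanSpace ℝ (Fin (m+1)) => y i) := fun i => by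
    simpa using (EuclideanSpace.proj i :
      EuclideanSpace ℝ (Fin (m+1)) →L[ℝ] ℝ).contDiff (n := (⊤ : WithTop ℕ∞))
  have hsqC : ContDiff ℝ (⊤ : WithTop ℕ∞) (sq' (m := m)) :=
    ContDiff.sum fun i _ => (hcoord (Fin.castSucc i)).pow 2
  refine ⟨?_, ?_, ?_, ?_⟩
  · -- smoothness
    intro x hx
    obtain ⟨hs1, ht, _⟩ := hx
    have hsne : (1 : ℝ) - sq' x ≠ 0 := by linarith
    refine ContDiffAt.contDiffWithinAt ?_
    refine (((hcoord (Fin.last m)).contDiffAt).sub (ContDiffAt.mul ?_ ?_)).of_le le_top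
    · exact (Real.contDiffAt_rpow_const_of_ne ht.ne').comp x
        ((hcoord (Fin.last m)).contDiffAt)
    · exact (Real.contDiffAt_rpow_const_of_ne hsne).comp x
        ((contDiff_const.sub hsqC).contDiffAt)
  · -- convexity
    constructor
    · intro x hx y hy l mu hl hmu hlm
      obtain ⟨hx1, hx2, hx3⟩ := hx
      obtain ⟨hy1, hy2, hy3⟩ := hy
      have hc := sq'_comb x y hl hmu hlm
      have hz : (l • x + mu • y) (Fin.last m) = l * x (Fin.last m) + mu * y (Fin.last m) := by
        simp [PiLp.add_apply, PiLp.smul_apply]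
      refine ⟨?_, ?_, ?_⟩
      · have := comb_lt hx1 hy1 hl hmu hlm
        calc sq' (l • x + mu • y) ≤ l * sq' x + mu * sq' y := hc
          _ < l * 1 + mu * 1 := this
          _ = 1 := by linarith
      · have := comb_lt hx2 hy2 hl hmu hlm
        simp only [Set.mem_setOf_eq, hz]
        linarith
      · have := comb_lt hx3 hy3 hl hmu hlm
        simp only [Set.mem_setOf_eq, hz]
        calc l * x (Fin.last m) + mu * y (Fin.last m)
            < l * (1 - sq' x) + mu * (1 - sq' y) := this
          _ = 1 - (l * sq' x + mu * sq' y) := by linarith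
          _ ≤ 1 - sq' (l • x + mu • y) := by linarith
    · intro x hx y hy l mu hl hmu hlm
      obtain ⟨hx1, hx2, hx3⟩ := hx
      obtain ⟨hy1, hy2, hy3⟩ := hy
      simp only [Set.mem_setOf_eq] at hx1 hx2 hx3 hy1 hy2 hy3
      have hc := sq'_comb x y hl hmu hlm
      have hz : (l • x + mu • y) (Fin.last m) = l * x (Fin.last m) + mu * y (Fin.last m) := by
        simp [PiLp.add_apply, PiLp.smul_apply]
      simp only [smul_eq_mul, hz]
      have key : l * ((x (Fin.last m)) ^ a * (1 - sq' x) ^ (1-a))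
          + mu * ((y (Fin.last m)) ^ a * (1 - sq' y) ^ (1-a))
          ≤ (l * x (Fin.last m) + mu * y (Fin.last m)) ^ a
            * (1 - sq' (l • x + mu • y)) ^ (1-a) := by
        calc l * ((x (Fin.last m)) ^ a * (1 - sq' x) ^ (1-a))
            + mu * ((y (Fin.last m)) ^ a * (1 - sq' y) ^ (1-a))
            ≤ (l * x (Fin.last m) + mu * y (Fin.last m)) ^ a
              * (l * (1 - sq' x) + mu * (1 - sq' y)) ^ (1-a) :=
            geom_comb ha1 ha2 hx2.le hy2.le (by linarith) (by linarith) hl hmu hlm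
          _ ≤ _ := by
            have hn1 : (0:ℝ) ≤ l * (1 - sq' x) := mul_nonneg hl (by linarith)
            have hn2 : (0:ℝ) ≤ mu * (1 - sq' y) := mul_nonneg hmu (by linarith)
            refine mul_le_mul_of_nonneg_left
              (Real.rpow_le_rpow (by linarith) (by linarith) (by linarith)) ?_
            positivity
      linarith
  · -- frontier
    intro x hx
    have hopen : IsOpen {x : EuclideanSpace ℝ (Fin (m+1)) |
        sq' x < 1 ∧ 0 < x (Fin.last m) ∧ x (Fin.last m) < 1 - sq' x} := by
      have c1 : Continuous fun y : EuclideanSpace ℝ (Fin (m+1)) => y (Fin.last m) :=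
        (continuous_apply _).comp (PiLp.continuous_ofLp _ _)
      exact (isOpen_lt hsqC.continuous continuous_const).inter
        ((isOpen_lt continuous_const c1).inter
          (isOpen_lt c1 (continuous_const.sub hsqC.continuous)))
    rw [hopen.frontier_eq] at hx
    obtain ⟨hxc, hxn⟩ := hx
    have hC : closure {x : EuclideanSpace ℝ (Fin (m+1)) |
          sq' x < 1 ∧ 0 < x (Fin.last m) ∧ x (Fin.last m) < 1 - sq' x}
        ⊆ {y | 0 ≤ y (Fin.last m) ∧ y (Fin.last m) ≤ 1 - sq' y} := by
      refine closure_minimal (fun y hy => ⟨hy.2.1.le, hy.2.2.le⟩) ?_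
      have c1 : Continuous fun y : EuclideanSpace ℝ (Fin (m+1)) => y (Fin.last m) :=
        (continuous_apply _).comp (PiLp.continuous_ofLp _ _)
      exact (isClosed_le continuous_const c1).inter
        (isClosed_le c1 (continuous_const.sub hsqC.continuous))
    obtain ⟨h0, h1⟩ := hC hxc
    rcases h0.eq_or_lt with h0' | h0'
    · simp only [← h0', Real.zero_rpow ha1.ne', zero_mul, sub_zero]
    · have hs1 : sq' x < 1 := by linarith
      have hnlt : ¬ (x (Fin.last m) < 1 - sq' x) := fun hlt => hxn ⟨hs1, h0', hlt⟩
      have heq : x (Fin.last m) = 1 - sq' x := le_antisymm h1 (not_lt.1 hnlt)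
      simp only [← heq, ← Real.rpow_add h0', show a + (1-a) = 1 by ring, Real.rpow_one,
        sub_self]
  · -- determinant
    intro x hx
    obtain ⟨hs1, ht, _⟩ := hx
    have hmm : (Matrix.of fun i j : Fin (m+1) =>
        fderiv ℝ (fun y => fderiv ℝ (wfun (a := a)) y (EuclideanSpace.single j 1)) x
          (EuclideanSpace.single i 1))
        = Hmat m a (x (Fin.last m)) (1 - sq' x) (fun i' => x (Fin.castSucc i')) := by
      apply Matrix.ext
      intro i j
      induction i using Fin.lastCases with
      | last =>
        induction j using Fin.lastCases with
        | last =>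
          rw [Matrix.of_apply, entry_last_last ha1 ha2 x ht hs1]
          simp [Hmat]
        | cast j =>
          rw [Matrix.of_apply, entry_last_cs ha1 ha2 x ht hs1 j]
          simp [Hmat]
      | cast i =>
        induction j using Fin.lastCases with
        | last =>
          rw [Matrix.of_apply, entry_cs_last ha1 ha2 x ht hs1 i]
          simp [Hmat]
        | cast j =>
          rw [Matrix.of_apply, entry_cs_cs ha1 ha2 x ht hs1 i j]
          simp [Hmat]
    rw [show (fun x : EuclideanSpace ℝ (Fin (m+1)) => x (Fin.last m) -
        (x (Fin.last m)) ^ a * (1 - sq' x) ^ (1 - a)) = wfun (a := a) from rfl]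
    rw [hmm]
    exact det_Hmat a _ _ ha1 ha2 ht (by linarith) _

end Aux

/-- On `Ω = {(x', xₙ) : |x'| < 1, 0 < xₙ < 1 - |x'|²} ⊂ ℝⁿ` (with `n = m+1 ≥ 2`), the
function `w = xₙ - xₙ^a (1-|x'|²)^{1-a}` (for `0 < a < 1`) is smooth and convex, vanishes on
`∂Ω`, and `det D²w = a(1-a)(2-2a)^{n-1} xₙ^{na-2} (1-|x'|²)^{1-na}`. -/
theorem stmt_15 (m : ℕ) (hm : 1 ≤ m) (a : ℝ) (ha : a ∈ Ioo (0:ℝ) 1)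
    (Ω : Set (EuclideanSpace ℝ (Fin (m + 1))))
    (hΩ : Ω = {x | sq' x < 1 ∧ 0 < x (Fin.last m) ∧ x (Fin.last m) < 1 - sq' x})
    (w : EuclideanSpace ℝ (Fin (m + 1)) → ℝ)
    (hw : w = fun x => x (Fin.last m) - (x (Fin.last m)) ^ a * (1 - sq' x) ^ (1 - a)) :
    ContDiffOn ℝ (⊤ : ℕ∞) w Ω ∧ ConvexOn ℝ Ω w ∧ (∀ x ∈ frontier Ω, w x = 0) ∧
    ∀ x ∈ Ω, hessDet w x =
      a * (1 - a) * (2 - 2 * a) ^ m * (x (Fin.last m)) ^ (((m : ℝ) + 1) * a - 2) *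
        (1 - sq' x) ^ (1 - ((m : ℝ) + 1) * a) := by
  obtain ⟨h1, h2, h3, h4⟩ := stmt_15' m hm a ha Ω hΩ w hw
  exact ⟨h1, h2, h3, fun x hx => h4 x hx⟩
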